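/- arXiv:1401.5875 — 3 statements merged into one kernel-verified Lean document; each statement's English description precedes it below -/
import Mathlib

section
/- The p-adic density of projective integer-matrix binary cubic forms is 1 - 1/p². More precisely, for a prime p, the number of quadruples (a,b,c,d) in (ℤ/pℤ)⁴ satisfying b² - ac ≡ 0, bc - ad ≡ 0, and c² - bd ≡ 0 (mod p) is exactly p². -/
/-!
The three congruences say that the Hessian of `a x³ + 3b x²y + 3c xy² + d y³` vanishes, i.e. that
the form is a scalar multiple of the cube of a linear form. Over a field such a form is determined
by `(a, b)` when `a ≠ 0` (it is `a (x + (b/a) y)³`), and by `d` alone when `a = 0` (then `b = c = 0`).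
This gives a bijection from `K²` onto the solution set, so there are `|K|²` solutions.
-/

section HessianVanishes

variable {K : Type*} [Field K] [DecidableEq K]

/-- `t = (a, b, c, d)` stands for `a x³ + 3b x²y + 3c xy² + d y³`; the three equations say that the
coefficients of its Hessian covariant vanish. -/
def HessianVanishes (t : K × K × K × K) : Prop :=
  t.2.1 ^ 2 = t.1 * t.2.2.1 ∧ t.2.1 * t.2.2.1 = t.1 * t.2.2.2 ∧ t.2.2.1 ^ 2 = t.2.1 * t.2.2.2

instance : DecidablePred (HessianVanishes (K := K)) := fun _ =>
  inferInstanceAs (Decidable (_ ∧ _ ∧ _))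

/-- The coefficients of `a (x + (b/a) y)³` if `a ≠ 0`, and of `b y³` if `a = 0`. -/
def scaledCubeCoeffs (s : K × K) : K × K × K × K :=
  if s.1 = 0 then (0, 0, 0, s.2) else (s.1, s.2, s.2 ^ 2 / s.1, s.2 ^ 3 / s.1 ^ 2)

theorem scaledCubeCoeffs_injective : Function.Injective (scaledCubeCoeffs (K := K)) := by
  rintro ⟨a, b⟩ ⟨a', b'⟩ h
  simp only [scaledCubeCoeffs] at h
  split_ifs at h <;> simp_all [Prod.ext_iff]

theorem hessianVanishes_scaledCubeCoeffs (s : K × K) : HessianVanishes (scaledCubeCoeffs s) := by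
  obtain ⟨a, b⟩ := s
  by_cases ha : a = 0
  · simp [HessianVanishes, scaledCubeCoeffs, ha]
  · simp only [HessianVanishes, scaledCubeCoeffs, ha, if_false]
    refine ⟨?_, ?_, ?_⟩ <;> field_simp

theorem HessianVanishes.mem_range_scaledCubeCoeffs {t : K × K × K × K} (h : HessianVanishes t) :
    t ∈ Set.range scaledCubeCoeffs := by
  obtain ⟨a, b, c, d⟩ := t
  obtain ⟨hb, hd, hc⟩ : b ^ 2 = a * c ∧ b * c = a * d ∧ c ^ 2 = b * d := h
  by_cases ha : a = 0
  · subst ha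
    have hb : b = 0 := pow_eq_zero_iff two_ne_zero |>.mp (by simpa using hb)
    have hc : c = 0 := pow_eq_zero_iff two_ne_zero |>.mp (by simpa [hb] using hc)
    exact ⟨(0, d), by simp [scaledCubeCoeffs, hb, hc]⟩
  · have hc : c = b ^ 2 / a := by
      field_simp
      linear_combination -hb
    have hd : d = b ^ 3 / a ^ 2 := by
      rw [hc] at hd
      field_simp at hd ⊢
      linear_combination -hd
    exact ⟨(a, b), by simp [scaledCubeCoeffs, ha, hc, hd]⟩

theorem hessianVanishes_iff_mem_range {t : K × K × K × K} :
    HessianVanishes t ↔ t ∈ Set.range scaledCubeCoeffs := by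
  refine ⟨HessianVanishes.mem_range_scaledCubeCoeffs, ?_⟩
  rintro ⟨s, rfl⟩
  exact hessianVanishes_scaledCubeCoeffs s

theorem card_filter_hessianVanishes [Fintype K] :
    (Finset.univ.filter (HessianVanishes (K := K))).card = Fintype.card K ^ 2 := by
  have : Finset.univ.filter (HessianVanishes (K := K)) = Finset.univ.image scaledCubeCoeffs := by
    ext t
    simp [hessianVanishes_iff_mem_range]
  rw [this, Finset.card_image_of_injective _ scaledCubeCoeffs_injective, Finset.card_univ,
    Fintype.card_prod, sq]

end HessianVanishes

/-- The number of quadruples $(a,b,c,d) \in (\mathbb{Z}/p\mathbb{Z})^4$ satisfying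
$b^2 = ac$, $bc = ad$, $c^2 = bd$ is exactly $p^2$; hence the $p$-adic density of
projective integer-matrix binary cubic forms is $1 - 1/p^2$. -/
theorem count_nonprojective_mod_p (p : ℕ) [Fact p.Prime] :
    (Finset.univ.filter (fun t : ZMod p × ZMod p × ZMod p × ZMod p =>
      t.2.1 ^ 2 = t.1 * t.2.2.1 ∧ t.2.1 * t.2.2.1 = t.1 * t.2.2.2 ∧
        t.2.2.1 ^ 2 = t.2.1 * t.2.2.2)).card = p ^ 2 := by
  have h := card_filter_hessianVanishes (K := ZMod p)
  rwa [ZMod.card] at h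
end

section
/- Suppose a, b, c, d are real numbers and A = b² − ac, B = ad − bc, C = c² − bd satisfy −A < B ≤ A ≤ C and 0 < 4AC − B² < X. Then |a| < (√2/3^{1/4})·X^{1/4} and |b| < (√2/3^{1/4})·X^{1/4}. -/
lemma davenport_quartic_bound (a X : ℝ) (hX : 0 < X) (h : a ^ 4 < 4 * X / 3) :
    |a| < Real.sqrt 2 / (3 : ℝ) ^ ((1 : ℝ) / 4) * X ^ ((1 : ℝ) / 4) := by
  have h3 : ((3 : ℝ) ^ ((1 : ℝ) / 4)) ^ (4 : ℕ) = 3 := by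
    rw [← Real.rpow_natCast ((3:ℝ) ^ ((1:ℝ)/4)) 4, ← Real.rpow_mul (by norm_num)]
    norm_num
  have hXp : (X ^ ((1 : ℝ) / 4)) ^ (4 : ℕ) = X := by
    rw [← Real.rpow_natCast (X ^ ((1:ℝ)/4)) 4, ← Real.rpow_mul hX.le]
    norm_num
  have hs2 : (Real.sqrt 2) ^ (4 : ℕ) = 4 := by
    rw [show (4:ℕ) = 2*2 from rfl, pow_mul, Real.sq_sqrt (by norm_num : (0:ℝ) ≤ 2)]
    norm_num
  have hpos : 0 ≤ Real.sqrt 2 / (3 : ℝ) ^ ((1 : ℝ) / 4) * X ^ ((1 : ℝ) / 4) :=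
    mul_nonneg (div_nonneg (Real.sqrt_nonneg 2) (Real.rpow_nonneg (by norm_num) _))
      (Real.rpow_nonneg hX.le _)
  refine lt_of_pow_lt_pow_left₀ 4 hpos ?_
  rw [mul_pow, div_pow, h3, hXp, hs2, pow_abs, abs_of_nonneg (by positivity)]
  linarith

/-- Davenport's reduction lemma, part 1: if the Hessian $A = b^2-ac$, $B = ad-bc$,
$C = c^2-bd$ satisfies $-A < B \le A \le C$ and $0 < 4AC - B^2 < X$, then
$|a|, |b| < \sqrt{2} \cdot 3^{-1/4} \cdot X^{1/4}$. -/
theorem davenport_bounds_ab (a b c d X : ℝ)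
    (h1 : -(b ^ 2 - a * c) < a * d - b * c)
    (h2 : a * d - b * c ≤ b ^ 2 - a * c)
    (h3 : b ^ 2 - a * c ≤ c ^ 2 - b * d)
    (h4 : 0 < 4 * (b ^ 2 - a * c) * (c ^ 2 - b * d) - (a * d - b * c) ^ 2)
    (h5 : 4 * (b ^ 2 - a * c) * (c ^ 2 - b * d) - (a * d - b * c) ^ 2 < X) :
    |a| < Real.sqrt 2 / (3 : ℝ) ^ ((1 : ℝ) / 4) * X ^ ((1 : ℝ) / 4) ∧
    |b| < Real.sqrt 2 / (3 : ℝ) ^ ((1 : ℝ) / 4) * X ^ ((1 : ℝ) / 4) := by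
  have hX : 0 < X := lt_trans h4 h5
  have hA : 0 < b ^ 2 - a * c := by linarith
  -- key: using the identity A·b² + B·ab + C·a² = A² and reducedness, a² + b² ≤ 2A
  have key : a ^ 2 + b ^ 2 ≤ 2 * (b ^ 2 - a * c) := by
    rcases le_or_gt 0 (a * b) with hab | hab
    · nlinarith [mul_nonneg hA.le (sq_nonneg (a - b)),
        mul_nonneg (by linarith : (0:ℝ) ≤ (b^2 - a*c) + (a*d - b*c)) hab,
        mul_nonneg (sub_nonneg.2 h3) (sq_nonneg a), sq_nonneg (a - b)]
    · nlinarith [mul_nonneg hA.le (sq_nonneg (a + b)),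
        mul_nonneg (sub_nonneg.2 h2) (neg_nonneg.2 hab.le),
        mul_nonneg (sub_nonneg.2 h3) (sq_nonneg a), sq_nonneg (a + b)]
  -- 3A² ≤ 4AC − B²
  have hD : 3 * (b ^ 2 - a * c) ^ 2 ≤ 4 * (b ^ 2 - a * c) * (c ^ 2 - b * d) - (a * d - b * c) ^ 2 := by
    nlinarith [mul_nonneg hA.le (sub_nonneg.2 h3)]
  have ha4 : a ^ 4 < 4 * X / 3 := by
    nlinarith [sq_nonneg a, sq_nonneg b, mul_nonneg (sq_nonneg a) (sq_nonneg b)]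
  have hb4 : b ^ 4 < 4 * X / 3 := by
    nlinarith [sq_nonneg a, sq_nonneg b, mul_nonneg (sq_nonneg a) (sq_nonneg b)]
  exact ⟨davenport_quartic_bound a X hX ha4, davenport_quartic_bound b X hX hb4⟩
end

section
/- Suppose a, b, c, d are real numbers and A = b² − ac, B = ad − bc, C = c² − bd satisfy −A < B ≤ A ≤ C and 0 < 4AC − B² < X. Then |ad| < (2/√3)·X^{1/2} and |bc| < (2/√3)·X^{1/2}. -/
lemma dav_aux (A B u s : ℝ) (hA : 0 < A) (hB1 : -A ≤ B) (hB2 : B ≤ A) (hu : 0 ≤ u)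
    (hs2A : 2*A*u ≤ s) (hsq : 4*(s + B*u)*u^2 ≤ s^2) (hP : A^2 ≤ s + B*u) :
    3*u^2 + B^2 ≤ 4*(s + B*u) := by
  rcases le_or_gt u A with h | h
  · nlinarith
  · have hPu : A*u ≤ s + B*u := by nlinarith
    have hs0 : 0 ≤ s := le_trans (by positivity) hs2A
    have hP0 : 0 < s + B*u := lt_of_lt_of_le (by positivity) hP
    have hP2 : u^2 ≤ s + B*u := by
      by_contra h2
      push_neg at h2
      have k1 : 4*(s+B*u)^2 < 4*(s+B*u)*u^2 := by nlinarith
      have k2 : 4*(s+B*u)^2 < s^2 := lt_of_lt_of_le k1 hsq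
      have k3 : 2*(s+B*u) < s := by nlinarith
      linarith [mul_nonneg (by linarith : (0:ℝ) ≤ A+B) hu]
    nlinarith

lemma dav_bc (A B C b c : ℝ) (hA : 0 < A) (hB1 : -A ≤ B) (hB2 : B ≤ A) (hAC : A ≤ C)
    (hI : A*c^2 + B*(b*c) + C*b^2 = A*C) :
    3*(b*c)^2 ≤ 4*A*C - B^2 := by
  rcases le_or_gt 0 (b*c) with h | h
  · have := dav_aux A B (b*c) (A*c^2 + C*b^2) hA hB1 hB2 h
      (by nlinarith [sq_nonneg (b-c), mul_nonneg (by linarith : (0:ℝ) ≤ C - A) (sq_nonneg b)])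
      (by nlinarith [sq_nonneg (A*c^2 - C*b^2)])
      (by nlinarith)
    nlinarith
  · have := dav_aux A (-B) (-(b*c)) (A*c^2 + C*b^2) hA (by linarith) (by linarith) (by linarith)
      (by nlinarith [sq_nonneg (b+c), mul_nonneg (by linarith : (0:ℝ) ≤ C - A) (sq_nonneg b)])
      (by nlinarith [sq_nonneg (A*c^2 - C*b^2)])
      (by nlinarith)
    nlinarith

/-- Davenport's reduction lemma, part 2: if the Hessian $A = b^2-ac$, $B = ad-bc$,
$C = c^2-bd$ satisfies $-A < B \le A \le C$ and $0 < 4AC - B^2 < X$, then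
$|ad|, |bc| < (2/\sqrt{3}) \cdot X^{1/2}$. -/
theorem davenport_bounds_ad_bc (a b c d X : ℝ)
    (h1 : -(b ^ 2 - a * c) < a * d - b * c)
    (h2 : a * d - b * c ≤ b ^ 2 - a * c)
    (h3 : b ^ 2 - a * c ≤ c ^ 2 - b * d)
    (h4 : 0 < 4 * (b ^ 2 - a * c) * (c ^ 2 - b * d) - (a * d - b * c) ^ 2)
    (h5 : 4 * (b ^ 2 - a * c) * (c ^ 2 - b * d) - (a * d - b * c) ^ 2 < X) :
    |a * d| < 2 / Real.sqrt 3 * X ^ ((1 : ℝ) / 2) ∧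
    |b * c| < 2 / Real.sqrt 3 * X ^ ((1 : ℝ) / 2) := by
  have hA : 0 < b ^ 2 - a * c := by linarith
  have key_bc : 3*(b*c)^2 ≤ 4*(b ^ 2 - a * c)*(c ^ 2 - b * d) - (a * d - b * c)^2 :=
    dav_bc (b ^ 2 - a * c) (a * d - b * c) (c ^ 2 - b * d) b c hA (by linarith) h2 h3 (by ring)
  have key_A : 3*(b ^ 2 - a * c)^2 ≤
      4*(b ^ 2 - a * c)*(c ^ 2 - b * d) - (a * d - b * c)^2 := by nlinarith
  have hX : 0 < X := lt_trans h4 h5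
  have hre : 2 / Real.sqrt 3 * X ^ ((1:ℝ)/2) = Real.sqrt ((2/Real.sqrt 3)^2 * X) := by
    rw [← Real.sqrt_eq_rpow, Real.sqrt_mul (by positivity),
      Real.sqrt_sq (by positivity)]
  have hsq3 : (2/Real.sqrt 3)^2 * X = 4/3 * X := by
    rw [div_pow, Real.sq_sqrt (by norm_num : (3:ℝ) ≥ 0).le]
    norm_num
  rw [hre, hsq3]
  constructor
  · apply (Real.lt_sqrt (abs_nonneg _)).mpr
    rw [sq_abs]
    nlinarith
  · apply (Real.lt_sqrt (abs_nonneg _)).mpr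
    rw [sq_abs]
    nlinarith
end
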